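/- arXiv:1208.3573 — 2 statements merged into one kernel-verified Lean document; each statement's English description precedes it below -/
import Mathlib

section
/- Suppose matrices W ∈ 𝒲 and V ∈ 𝒱 with ||V||_F = 1 minimize ||AW − V||_F over all W ∈ 𝒲, V ∈ 𝒱 with ||V||_F = 1, and V is invertible. Then the minimization can be performed columnwise: for each j, the pair (w_j, v_j) of j-th columns minimizes ||A w − v||_2 over admissible columns w and admissible columns v with ||v||_2 = ||v_j||_2 > 0. -/
open Matrix

/-- Viewing a plain complex vector as an element of Euclidean space. -/
def euc {n : ℕ} (x : Fin n → ℂ) : EuclideanSpace ℂ (Fin n) := WithLp.toLp 2 x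

/-- The Frobenius norm of a matrix. -/
noncomputable def frobNorm {m n : ℕ} (M : Matrix (Fin m) (Fin n) ℂ) : ℝ :=
  Real.sqrt (∑ i, ∑ j, ‖M i j‖ ^ 2)

/-- `v` is an admissible `j`-th column for the standard subspace with column patterns `P`. -/
def Supported {n : ℕ} (P : Fin n → Set (Fin n)) (j : Fin n) (v : Fin n → ℂ) : Prop :=
  ∀ i, i ∉ P j → v i = 0

/-- `M` lies in the standard matrix subspace with column patterns `P`. -/
def MatSupported {n : ℕ} (P : Fin n → Set (Fin n)) (M : Matrix (Fin n) (Fin n) ℂ) : Prop :=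
  ∀ j, Supported P j (fun i => M i j)

/-!
Replacing the `j`-th columns of `W` and `V` by admissible `w` and `v` with `‖v‖₂ = ‖v_j‖₂` keeps
the pair admissible and `‖V‖_F = 1`, and changes only the `j`-th column of `AW − V`, into
`Aw − v`. Since `‖·‖_F²` is the sum of the squared column norms, minimality of `(W, V)` compares
exactly the `j`-th terms. The column `v_j` is nonzero because `V` is invertible.
-/

lemma norm_euc_sq {n : ℕ} (x : Fin n → ℂ) : ‖euc x‖ ^ 2 = ∑ i, ‖x i‖ ^ 2 := by
  rw [euc, EuclideanSpace.norm_eq, Real.sq_sqrt (by positivity)]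

lemma frobNorm_nonneg {m n : ℕ} (M : Matrix (Fin m) (Fin n) ℂ) : 0 ≤ frobNorm M :=
  Real.sqrt_nonneg _

lemma frobNorm_sq_eq_sum_norm_col_sq {m n : ℕ} (M : Matrix (Fin m) (Fin n) ℂ) :
    frobNorm M ^ 2 = ∑ k, ‖euc (fun i => M i k)‖ ^ 2 := by
  rw [frobNorm, Real.sq_sqrt (by positivity), Finset.sum_comm]
  simp only [norm_euc_sq]

lemma frobNorm_updateCol_sq {m n : ℕ} (M : Matrix (Fin m) (Fin n) ℂ) (j : Fin n)
    (c : Fin m → ℂ) :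
    frobNorm (M.updateCol j c) ^ 2 =
      frobNorm M ^ 2 - ‖euc (fun i => M i j)‖ ^ 2 + ‖euc c‖ ^ 2 := by
  simp only [frobNorm_sq_eq_sum_norm_col_sq, ← Finset.add_sum_erase _ _ (Finset.mem_univ j),
    updateCol_self]
  have hrest : ∀ k ∈ Finset.univ.erase j,
      ‖euc (fun i => M.updateCol j c i k)‖ ^ 2 = ‖euc (fun i => M i k)‖ ^ 2 := fun k hk => by
    simp only [updateCol_ne (Finset.ne_of_mem_erase hk)]
  rw [Finset.sum_congr rfl hrest]
  ring

lemma frobNorm_updateCol_of_norm_eq {m n : ℕ} (M : Matrix (Fin m) (Fin n) ℂ) (j : Fin n)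
    {c : Fin m → ℂ} (hc : ‖euc c‖ = ‖euc (fun i => M i j)‖) :
    frobNorm (M.updateCol j c) = frobNorm M := by
  have hsq := frobNorm_updateCol_sq M j c
  rw [hc, sub_add_cancel] at hsq
  exact (sq_eq_sq₀ (frobNorm_nonneg _) (frobNorm_nonneg M)).mp hsq

lemma norm_col_le_of_frobNorm_le_updateCol {m n : ℕ} (M : Matrix (Fin m) (Fin n) ℂ)
    (j : Fin n) {c : Fin m → ℂ} (h : frobNorm M ≤ frobNorm (M.updateCol j c)) :
    ‖euc (fun i => M i j)‖ ≤ ‖euc c‖ := by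
  have hsq : frobNorm M ^ 2 ≤ frobNorm (M.updateCol j c) ^ 2 :=
    pow_le_pow_left₀ (frobNorm_nonneg M) h 2
  rw [frobNorm_updateCol_sq] at hsq
  exact (pow_le_pow_iff_left₀ (norm_nonneg _) (norm_nonneg _) two_ne_zero).mp (by linarith)

lemma updateCol_sub_updateCol {m n α : Type*} [DecidableEq n] [Sub α] (M N : Matrix m n α)
    (j : n) (c d : m → α) : M.updateCol j c - N.updateCol j d = (M - N).updateCol j (c - d) := by
  ext i k
  simp only [Matrix.sub_apply, updateCol_apply]
  split_ifs <;> simp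

lemma MatSupported.updateCol {n : ℕ} {P : Fin n → Set (Fin n)} {M : Matrix (Fin n) (Fin n) ℂ}
    (hM : MatSupported P M) {j : Fin n} {c : Fin n → ℂ} (hc : Supported P j c) :
    MatSupported P (M.updateCol j c) := by
  intro k i hi
  change M.updateCol j c i k = 0
  rw [updateCol_apply]
  split_ifs with hk
  · exact hc i (hk ▸ hi)
  · exact hM k i hi

lemma norm_euc_col_pos_of_isUnit_det {n : ℕ} {V : Matrix (Fin n) (Fin n) ℂ}
    (hV : IsUnit V.det) (j : Fin n) : 0 < ‖euc (fun i => V i j)‖ := by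
  refine norm_pos_iff.mpr fun hcol => hV.ne_zero (det_eq_zero_of_column_eq_zero j fun i => ?_)
  exact congrFun ((WithLp.toLp_eq_zero 2).mp hcol) i

theorem stmt_2_general {n : ℕ} (A : Matrix (Fin n) (Fin n) ℂ)
    (Pw Pv : Fin n → Set (Fin n)) (W V : Matrix (Fin n) (Fin n) ℂ)
    (hW : MatSupported Pw W) (hV : MatSupported Pv V) (hVnorm : frobNorm V = 1)
    (hmin : ∀ W' V' : Matrix (Fin n) (Fin n) ℂ, MatSupported Pw W' → MatSupported Pv V' →
      frobNorm V' = 1 → frobNorm (A * W - V) ≤ frobNorm (A * W' - V'))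
    (hVinv : IsUnit V.det) :
    ∀ j : Fin n, 0 < ‖euc (fun i => V i j)‖ ∧
      ∀ w v : Fin n → ℂ, Supported Pw j w → Supported Pv j v →
        ‖euc v‖ = ‖euc (fun i => V i j)‖ →
        ‖euc (A.mulVec (fun i => W i j)) - euc (fun i => V i j)‖ ≤
          ‖euc (A.mulVec w) - euc v‖ := by
  intro j
  refine ⟨norm_euc_col_pos_of_isUnit_det hVinv j, fun w v hw hv hnorm => ?_⟩
  have hVnorm' : frobNorm (V.updateCol j v) = 1 :=
    (frobNorm_updateCol_of_norm_eq V j hnorm).trans hVnorm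
  have hle := hmin _ _ (hW.updateCol hw) (hV.updateCol hv) hVnorm'
  rw [mul_updateCol, updateCol_sub_updateCol] at hle
  have hcolj : (fun i => (A * W - V) i j) = A *ᵥ (fun i => W i j) - fun i => V i j := by
    ext i
    simp [mul_apply, mulVec, dotProduct]
  have hcol := norm_col_le_of_frobNorm_le_updateCol _ j hle
  rw [hcolj] at hcol
  exact hcol

/-- If `W ∈ 𝒲`, `V ∈ 𝒱` with `‖V‖_F = 1` minimize `‖AW − V‖_F` over the
standard matrix subspaces `𝒲, 𝒱` subject to `‖V‖_F = 1`, and `V` is invertible, then for each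
`j` the pair of `j`-th columns `(w_j, v_j)` minimizes `‖A w − v‖₂` over admissible columns `w`
and admissible columns `v` with `‖v‖₂ = ‖v_j‖₂ > 0`. -/
theorem stmt_2 {n : ℕ} (A : Matrix (Fin n) (Fin n) ℂ) (hA : IsUnit A.det)
    (Pw Pv : Fin n → Set (Fin n)) (W V : Matrix (Fin n) (Fin n) ℂ)
    (hW : MatSupported Pw W) (hV : MatSupported Pv V) (hVnorm : frobNorm V = 1)
    (hmin : ∀ W' V' : Matrix (Fin n) (Fin n) ℂ, MatSupported Pw W' → MatSupported Pv V' →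
      frobNorm V' = 1 → frobNorm (A * W - V) ≤ frobNorm (A * W' - V'))
    (hVinv : IsUnit V.det) :
    ∀ j : Fin n, 0 < ‖euc (fun i => V i j)‖ ∧
      ∀ w v : Fin n → ℂ, Supported Pw j w → Supported Pv j v →
        ‖euc v‖ = ‖euc (fun i => V i j)‖ →
        ‖euc (A.mulVec (fun i => W i j)) - euc (fun i => V i j)‖ ≤
          ‖euc (A.mulVec w) - euc v‖ :=
  stmt_2_general A Pw Pv W V hW hV hVnorm hmin hVinv
end

section
/- For every invertible diagonal matrix D and invertible V, (VD, WD) maps to the same product as (V, W) under the map (V, W) ↦ W V^{-1}; i.e., (WD)(VD)^{-1} = W V^{-1}. Consequently, the rank of the derivative of this map at any invertible pair (V, W) in 𝒱 × 𝒲 (for standard matrix subspaces closed under right multiplication by diagonal matrices) is at most dim 𝒱 + dim 𝒲 − n. -/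
/-! The fibres of `(V, W) ↦ W V⁻¹` contain the orbits `D ↦ (V D, W D)` of the invertible
diagonal matrices, and standard subspaces are stable under right multiplication by diagonal
matrices. The tangent space of such an orbit, `{(V diag d, W diag d)}`, is `n`-dimensional
because `V` is invertible, and it lies in the kernel of the derivative; rank–nullity gives the
bound. -/

open Matrix

/-- A standard matrix subspace: one spanned by standard basis matrices. -/
def IsStandard {n : ℕ} (𝒱 : Submodule ℂ (Matrix (Fin n) (Fin n) ℂ)) : Prop :=
  ∃ P : Set (Fin n × Fin n),
    𝒱 = Submodule.span ℂ {M | ∃ p ∈ P, M = Matrix.single p.1 p.2 (1 : ℂ)}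

theorem Matrix.single_mul_diagonal {m n α : Type*} [Fintype n] [DecidableEq m] [DecidableEq n]
    [NonUnitalNonAssocSemiring α] (i : m) (j : n) (c : α) (d : n → α) :
    single i j c * diagonal d = single i j (c * d j) := by
  ext k l
  by_cases hl : j = l <;> simp [mul_diagonal, single_apply, hl]

theorem Matrix.mul_mul_inv_mul_cancel_right {n R : Type*} [Fintype n] [DecidableEq n] [CommRing R]
    (V W D : Matrix n n R) (hD : IsUnit D.det) : W * D * (V * D)⁻¹ = W * V⁻¹ := by
  rw [mul_inv_rev, ← mul_assoc, mul_assoc W, mul_nonsing_inv _ hD, mul_one]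

theorem LinearMap.finrank_range_add_finrank_le_of_comp_eq_zero {K M N P : Type*} [DivisionRing K]
    [AddCommGroup M] [Module K M] [FiniteDimensional K M] [AddCommGroup N] [Module K N]
    [AddCommGroup P] [Module K P] (L : M →ₗ[K] N) {ψ : P →ₗ[K] M} (hψ : Function.Injective ψ)
    (hLψ : L ∘ₗ ψ = 0) :
    Module.finrank K (range L) + Module.finrank K P ≤ Module.finrank K M :=
  calc Module.finrank K (range L) + Module.finrank K P
      = Module.finrank K (range L) + Module.finrank K (range ψ) := by
        rw [finrank_range_of_inj hψ]
    _ ≤ Module.finrank K (range L) + Module.finrank K (ker L) :=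
        Nat.add_le_add_left (Submodule.finrank_mono (range_le_ker_iff.mpr hLψ)) _
    _ = Module.finrank K M := finrank_range_add_finrank_ker L

namespace IsStandard

variable {n : ℕ} {𝒱 : Submodule ℂ (Matrix (Fin n) (Fin n) ℂ)} {A : Matrix (Fin n) (Fin n) ℂ}

theorem mul_diagonal_mem (h𝒱 : IsStandard 𝒱) (hA : A ∈ 𝒱) (d : Fin n → ℂ) :
    A * diagonal d ∈ 𝒱 := by
  obtain ⟨P, rfl⟩ := h𝒱
  refine (Submodule.mem_comap (f := LinearMap.mulRight ℂ (diagonal d))).mp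
    (Submodule.span_le.mpr ?_ hA)
  rintro _ ⟨p, hp, rfl⟩
  have hsingle : single p.1 p.2 (1 : ℂ) * diagonal d = d p.2 • single p.1 p.2 1 := by
    rw [single_mul_diagonal, smul_single, smul_eq_mul, one_mul, mul_one]
  rw [SetLike.mem_coe, Submodule.mem_comap, LinearMap.mulRight_apply, hsingle]
  exact Submodule.smul_mem _ _ (Submodule.subset_span ⟨p, hp, rfl⟩)

noncomputable def mulDiagonal (h𝒱 : IsStandard 𝒱) (hA : A ∈ 𝒱) : (Fin n → ℂ) →ₗ[ℂ] 𝒱 :=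
  (LinearMap.mulLeft ℂ A ∘ₗ diagonalLinearMap (Fin n) ℂ ℂ).codRestrict 𝒱
    (h𝒱.mul_diagonal_mem hA)

@[simp]
theorem coe_mulDiagonal (h𝒱 : IsStandard 𝒱) (hA : A ∈ 𝒱) (d : Fin n → ℂ) :
    (h𝒱.mulDiagonal hA d : Matrix (Fin n) (Fin n) ℂ) = A * diagonal d :=
  rfl

theorem mulDiagonal_injective (h𝒱 : IsStandard 𝒱) (hA : A ∈ 𝒱) (hAdet : IsUnit A.det) :
    Function.Injective (h𝒱.mulDiagonal hA) := fun d e hde =>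
  diagonal_injective <| ((isUnit_iff_isUnit_det A).mpr hAdet).mul_left_cancel <| by
    simpa only [coe_mulDiagonal] using congrArg Subtype.val hde

end IsStandard

theorem stmt_8_general {n : ℕ} (𝒱 𝒲 : Submodule ℂ (Matrix (Fin n) (Fin n) ℂ))
    (hVs : IsStandard 𝒱) (hWs : IsStandard 𝒲)
    (V W : Matrix (Fin n) (Fin n) ℂ) (hV : V ∈ 𝒱) (hW : W ∈ 𝒲)
    (hVinv : IsUnit V.det) :
    (∀ d : Fin n → ℂ, (∀ i, d i ≠ 0) →
      (W * Matrix.diagonal d) * (V * Matrix.diagonal d)⁻¹ = W * V⁻¹) ∧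
    Module.finrank ℂ
        (LinearMap.range
          (((LinearMap.mulRight ℂ V⁻¹).comp (𝒲.subtype.comp (LinearMap.snd ℂ 𝒱 𝒲))) -
           ((LinearMap.mulRight ℂ V⁻¹).comp ((LinearMap.mulLeft ℂ (W * V⁻¹)).comp
              (𝒱.subtype.comp (LinearMap.fst ℂ 𝒱 𝒲)))))) ≤
      Module.finrank ℂ 𝒱 + Module.finrank ℂ 𝒲 - n := by
  refine ⟨fun d hd => mul_mul_inv_mul_cancel_right V W _ ?_, ?_⟩
  · exact (isUnit_iff_isUnit_det _).mp (isUnit_diagonal.mpr (Pi.isUnit_iff.mpr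
      fun i => (hd i).isUnit))
  let ψ := (hVs.mulDiagonal hV).prod (hWs.mulDiagonal hW)
  have hψ : Function.Injective ψ := fun d e hde =>
    hVs.mulDiagonal_injective hV hVinv (congrArg Prod.fst hde)
  refine Nat.le_sub_of_add_le ?_
  convert LinearMap.finrank_range_add_finrank_le_of_comp_eq_zero _ hψ ?_ using 1
  · rw [Module.finrank_fin_fun]
  · exact (Module.finrank_prod ..).symm
  refine LinearMap.ext fun d => ?_
  change W * diagonal d * V⁻¹ - W * V⁻¹ * (V * diagonal d) * V⁻¹ = 0
  rw [mul_assoc W V⁻¹, nonsing_inv_mul_cancel_left _ _ hVinv, sub_self]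

/-- For every invertible diagonal `D`, `(WD)(VD)⁻¹ = WV⁻¹`.  Consequently,
for standard matrix subspaces `𝒱, 𝒲` (closed under right multiplication by diagonal
matrices), the rank of the derivative of `(V, W) ↦ WV⁻¹` at any invertible pair
`(V, W) ∈ 𝒱 × 𝒲` is at most `dim 𝒱 + dim 𝒲 − n`. -/
theorem stmt_8 {n : ℕ} (𝒱 𝒲 : Submodule ℂ (Matrix (Fin n) (Fin n) ℂ))
    (hVs : IsStandard 𝒱) (hWs : IsStandard 𝒲)
    (V W : Matrix (Fin n) (Fin n) ℂ) (hV : V ∈ 𝒱) (hW : W ∈ 𝒲)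
    (hVinv : IsUnit V.det) (hWinv : IsUnit W.det) :
    (∀ d : Fin n → ℂ, (∀ i, d i ≠ 0) →
      (W * Matrix.diagonal d) * (V * Matrix.diagonal d)⁻¹ = W * V⁻¹) ∧
    Module.finrank ℂ
        (LinearMap.range
          (((LinearMap.mulRight ℂ V⁻¹).comp (𝒲.subtype.comp (LinearMap.snd ℂ 𝒱 𝒲))) -
           ((LinearMap.mulRight ℂ V⁻¹).comp ((LinearMap.mulLeft ℂ (W * V⁻¹)).comp
              (𝒱.subtype.comp (LinearMap.fst ℂ 𝒱 𝒲)))))) ≤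
      Module.finrank ℂ 𝒱 + Module.finrank ℂ 𝒲 - n :=
  stmt_8_general 𝒱 𝒲 hVs hWs V W hV hW hVinv
end
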